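/- There exists a constant C > 0 such that the following holds: for all D > 0, δ > 0, reals K ≥ 1 and R ≥ 1, every function u : ℤ³ → ℂ with u(0) = 0, with |u(β)| ≤ D/|β|² for all β ≠ 0, and with |u(α)| ≤ δ/|α|² for all α with |α| ≥ R, and every k ∈ ℤ³ with |k| ≥ 2K and |k| ≥ 2R, one has Σ_{α ∈ ℤ³, |α| ≤ 2|k|, 0 < |k−α| ≤ K} |α|·|u(α)|·|u(k−α)| ≤ C·δ·D·K/|k|. -/

import Mathlib

/-! For `α` in the range of summation, `|k - α| ≤ K ≤ |k|/2` forces `|α| ≥ |k|/2 ≥ R`, so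
`|α| |u α| ≤ δ / |α| ≤ 2δ / |k|`, and the sum is at most `2δD/|k|` times
`∑_{0 < |β| ≤ K} |β|⁻²`. Counting lattice points shell by shell (the cube of side `2n + 1`
has `(2n+1)³ - (2n-1)³ ≤ 26 n²` points on its boundary, each of norm `≥ n`), the latter
lattice sum is `O(K)`. -/

/-- The Euclidean norm of a lattice point in `ℤ³`. -/
noncomputable def znorm (a : Fin 3 → ℤ) : ℝ := Real.sqrt (∑ i, ((a i : ℝ)) ^ 2)

lemma znorm_zero : znorm 0 = 0 := by simp [znorm]

lemma znorm_eq_norm (a : Fin 3 → ℤ) :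
    znorm a = ‖(WithLp.toLp 2 (fun i => (a i : ℝ)) : EuclideanSpace ℝ (Fin 3))‖ := by
  simp [znorm, EuclideanSpace.norm_eq, sq_abs]

lemma znorm_le_znorm_sub_add (k a : Fin 3 → ℤ) : znorm k ≤ znorm (k - a) + znorm a := by
  have h : (WithLp.toLp 2 fun i => ((k - a) i : ℝ) : EuclideanSpace ℝ (Fin 3)) =
      WithLp.toLp 2 (fun i => (k i : ℝ)) - WithLp.toLp 2 (fun i => (a i : ℝ)) := by
    rw [← WithLp.toLp_sub]
    congr 1
    ext i
    simp
  rw [znorm_eq_norm, znorm_eq_norm, znorm_eq_norm, h, add_comm]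
  exact norm_le_norm_add_norm_sub' _ _

lemma abs_apply_le_znorm (a : Fin 3 → ℤ) (i : Fin 3) : |(a i : ℝ)| ≤ znorm a := by
  rw [znorm, ← Real.sqrt_sq_eq_abs]
  exact Real.sqrt_le_sqrt <| Finset.single_le_sum (f := fun j => ((a j : ℝ)) ^ 2)
    (fun _ _ => sq_nonneg _) (Finset.mem_univ i)

noncomputable def box (n : ℕ) : Finset (Fin 3 → ℤ) :=
  Finset.Icc (fun _ => -(n : ℤ)) (fun _ => (n : ℤ))

lemma mem_box {n : ℕ} {a : Fin 3 → ℤ} : a ∈ box n ↔ ∀ i, |a i| ≤ n := by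
  simp [box, Finset.mem_Icc, Pi.le_def, abs_le, forall_and]

lemma card_box (n : ℕ) : (box n).card = (2 * n + 1) ^ 3 := by
  simp only [box, Pi.card_Icc, Int.card_Icc, Finset.prod_const, Finset.card_univ,
    Fintype.card_fin]
  congr 1
  omega

lemma box_mono {m n : ℕ} (h : m ≤ n) : box m ⊆ box n := fun a ha =>
  mem_box.2 fun i => (mem_box.1 ha i).trans (by exact_mod_cast h)

lemma box_zero : box 0 = {0} := by
  ext a
  simp only [mem_box, Nat.cast_zero, abs_nonpos_iff, Finset.mem_singleton, funext_iff,
    Pi.zero_apply]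

lemma mem_box_of_znorm_le {n : ℕ} {a : Fin 3 → ℤ} (h : znorm a ≤ n) : a ∈ box n :=
  mem_box.2 fun i => by exact_mod_cast (abs_apply_le_znorm a i).trans h

lemma le_znorm_of_mem_box_succ_sdiff {n : ℕ} {a : Fin 3 → ℤ} (h : a ∈ box (n + 1) \ box n) :
    (n + 1 : ℝ) ≤ znorm a := by
  obtain ⟨i, hi⟩ : ∃ i, (n : ℤ) < |a i| := by simpa [mem_box] using (Finset.mem_sdiff.1 h).2
  calc (n + 1 : ℝ) ≤ |(a i : ℝ)| := by exact_mod_cast hi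
    _ ≤ znorm a := abs_apply_le_znorm a i

lemma card_box_succ_sdiff_le (n : ℕ) :
    ((box (n + 1) \ box n).card : ℝ) ≤ 26 * (n + 1) ^ 2 := by
  rw [Finset.card_sdiff_of_subset (box_mono n.le_succ), card_box, card_box,
    Nat.cast_sub (Nat.pow_le_pow_left (by omega) 3)]
  push_cast
  nlinarith [sq_nonneg (n : ℝ), n.cast_nonneg (α := ℝ)]

lemma sum_box_succ_sdiff_inv_znorm_sq_le (n : ℕ) :
    ∑ a ∈ box (n + 1) \ box n, 1 / znorm a ^ 2 ≤ 26 := by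
  calc ∑ a ∈ box (n + 1) \ box n, 1 / znorm a ^ 2
      ≤ ∑ _a ∈ box (n + 1) \ box n, 1 / ((n : ℝ) + 1) ^ 2 := by
        gcongr with a ha
        exact le_znorm_of_mem_box_succ_sdiff ha
    _ = ((box (n + 1) \ box n).card : ℝ) / ((n : ℝ) + 1) ^ 2 := by
        rw [Finset.sum_const, nsmul_eq_mul, mul_one_div]
    _ ≤ 26 := by
        rw [div_le_iff₀ (by positivity)]
        exact card_box_succ_sdiff_le n

lemma sum_box_sdiff_zero_inv_znorm_sq_le (n : ℕ) :
    ∑ a ∈ box n \ {0}, 1 / znorm a ^ 2 ≤ 26 * (n : ℝ) := by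
  induction n with
  | zero => simp [box_zero]
  | succ n ih =>
    have hsub : box n \ {0} ⊆ box (n + 1) \ {0} :=
      Finset.sdiff_subset_sdiff (box_mono n.le_succ) le_rfl
    have hshell : (box (n + 1) \ {0}) \ (box n \ {0}) = box (n + 1) \ box n := by
      rw [sdiff_sdiff_sdiff_cancel_right (by simpa [box_zero] using box_mono (Nat.zero_le n))]
    rw [← Finset.sum_sdiff hsub, hshell]
    push_cast
    linarith [sum_box_succ_sdiff_inv_znorm_sq_le n]

lemma sum_inv_znorm_sq_le {s : Finset (Fin 3 → ℤ)} {r : ℝ} (hr : 1 ≤ r)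
    (hs : ∀ β ∈ s, β ≠ 0 ∧ znorm β ≤ r) :
    ∑ β ∈ s, 1 / znorm β ^ 2 ≤ 52 * r := by
  have hceil : (⌈r⌉₊ : ℝ) < r + 1 := Nat.ceil_lt_add_one (by linarith)
  have hsub : s ⊆ box ⌈r⌉₊ \ {0} := fun β hβ => Finset.mem_sdiff.2
    ⟨mem_box_of_znorm_le ((hs β hβ).2.trans (Nat.le_ceil r)), by simpa using (hs β hβ).1⟩
  calc ∑ β ∈ s, 1 / znorm β ^ 2 ≤ ∑ β ∈ box ⌈r⌉₊ \ {0}, 1 / znorm β ^ 2 :=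
        Finset.sum_le_sum_of_subset_of_nonneg hsub fun _ _ _ => by positivity
    _ ≤ 26 * (⌈r⌉₊ : ℝ) := sum_box_sdiff_zero_inv_znorm_sq_le _
    _ ≤ 52 * r := by linarith

lemma znorm_mul_norm_mul_norm_le {u : (Fin 3 → ℤ) → ℂ} {D δ K R : ℝ}
    (hD : 0 ≤ D) (hδ : 0 ≤ δ)
    (hDu : ∀ β : Fin 3 → ℤ, β ≠ 0 → ‖u β‖ ≤ D / znorm β ^ 2)
    (hδu : ∀ α : Fin 3 → ℤ, R ≤ znorm α → ‖u α‖ ≤ δ / znorm α ^ 2)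
    {k a : Fin 3 → ℤ} (hkK : 2 * K ≤ znorm k) (hkR : 2 * R ≤ znorm k)
    (hka : 0 < znorm (k - a)) (hkaK : znorm (k - a) ≤ K) :
    znorm a * ‖u a‖ * ‖u (k - a)‖ ≤ 2 * δ * D / znorm k * (1 / znorm (k - a) ^ 2) := by
  have hak : znorm k / 2 ≤ znorm a := by linarith [znorm_le_znorm_sub_add k a]
  have ha : 0 < znorm a := by linarith
  have hne : k - a ≠ 0 := fun h => hka.ne' (h ▸ znorm_zero)
  calc znorm a * ‖u a‖ * ‖u (k - a)‖
      ≤ znorm a * (δ / znorm a ^ 2) * (D / znorm (k - a) ^ 2) := by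
        gcongr
        exacts [hδu a (by linarith), hDu _ hne]
    _ = δ / znorm a * D * (1 / znorm (k - a) ^ 2) := by field_simp
    _ ≤ 2 * δ / znorm k * D * (1 / znorm (k - a) ^ 2) := by
        have h : δ / znorm a ≤ 2 * δ / znorm k := by
          rw [div_le_div_iff₀ ha (by linarith)]
          nlinarith
        gcongr
    _ = 2 * δ * D / znorm k * (1 / znorm (k - a) ^ 2) := by ring

/-- There is a constant `C > 0` such that: for all `D > 0`, `δ > 0`, `K ≥ 1`, `R ≥ 1`,
every `u : ℤ³ → ℂ` with `u 0 = 0`, `|u β| ≤ D/|β|²` for all `β ≠ 0`, and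
`|u α| ≤ δ/|α|²` for `|α| ≥ R`, and every `k` with `|k| ≥ 2K` and `|k| ≥ 2R`,
`∑_{|α| ≤ 2|k|, 0 < |k−α| ≤ K} |α|·|u α|·|u (k−α)| ≤ C·δ·D·K/|k|`. -/
theorem low_cofrequency_piece_bound :
    ∃ C : ℝ, 0 < C ∧
      ∀ (D δ K R : ℝ), 0 < D → 0 < δ → 1 ≤ K → 1 ≤ R →
        ∀ u : (Fin 3 → ℤ) → ℂ, u 0 = 0 →
          (∀ β : Fin 3 → ℤ, β ≠ 0 → ‖u β‖ ≤ D / znorm β ^ 2) →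
          (∀ α : Fin 3 → ℤ, R ≤ znorm α → ‖u α‖ ≤ δ / znorm α ^ 2) →
          ∀ k : Fin 3 → ℤ, 2 * K ≤ znorm k → 2 * R ≤ znorm k →
            (∑' α : {a : Fin 3 → ℤ //
                znorm a ≤ 2 * znorm k ∧ 0 < znorm (k - a) ∧ znorm (k - a) ≤ K},
              znorm α.1 * ‖u α.1‖ * ‖u (k - α.1)‖)
              ≤ C * δ * D * K / znorm k := by
  refine ⟨104, by norm_num, fun D δ K R hD hδ hK _ u _ hDu hδu k hkK hkR => ?_⟩
  have hk : 0 < znorm k := by linarith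
  refine tsum_le_of_sum_le' (by positivity) fun s => ?_
  calc ∑ α ∈ s, znorm α.1 * ‖u α.1‖ * ‖u (k - α.1)‖
      ≤ ∑ α ∈ s, 2 * δ * D / znorm k * (1 / znorm (k - α.1) ^ 2) :=
        Finset.sum_le_sum fun α _ => znorm_mul_norm_mul_norm_le hD.le hδ.le hDu hδu hkK hkR
          α.2.2.1 α.2.2.2
    _ = 2 * δ * D / znorm k * ∑ β ∈ s.image (fun α => k - α.1), 1 / znorm β ^ 2 := by
        rw [Finset.sum_image fun x _ y _ h => Subtype.ext (sub_right_injective h),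
          Finset.mul_sum]
    _ ≤ 2 * δ * D / znorm k * (52 * K) := by
        gcongr
        refine sum_inv_znorm_sq_le hK fun β hβ => ?_
        obtain ⟨α, -, rfl⟩ := Finset.mem_image.1 hβ
        exact ⟨fun h => α.2.2.1.ne' (h ▸ znorm_zero), α.2.2.2⟩
    _ = 104 * δ * D * K / znorm k := by ring
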